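/- For any sequence of complex numbers (c_k) and the Walsh functions, ∑_{j=1}^{q} D_j = q·K_q where K_q is the Fejér kernel; moreover for q = q_{A−1} = ∑_{j=0}^{A−1} 4^j and M_j = 2^j, the L^{1/2} quasi-norm satisfies ∫_G |q_{A−1} K_{q_{A−1}}|^{1/2} dμ ≥ c·A for an absolute constant c > 0 and all A ≥ 5, given the pointwise lower bound q_{A−1}|K_{q_{A−1}}(x)| ≥ 4^{k+s}/4 on the set I_{2s+1}(e_{2k} + e_{2s}) of measure 2^{−(2s+1)}, for 0 ≤ k ≤ A−3 and k+2 ≤ s ≤ A−1. -/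

import Mathlib

/-! On the pairwise disjoint cylinders `I_{2k+5}(e_{2k} + e_{2k+4})`, `k < A - 2`, the pointwise
bound with `s = k + 2` gives `√(q |K_q|) ≥ 2^{2k+1}`, while each cylinder has Haar measure
`2^{-(2k+5)}` (translation invariance, and each further coordinate halves the measure). Each
cylinder thus contributes `1/16` to the integral, which is therefore at least
`(A - 2) / 16 ≥ A / 32`. -/

open MeasureTheory Filter
open scoped ENNReal NNReal
noncomputable section

instance : TopologicalSpace (ZMod 2) := ⊥
instance : DiscreteTopology (ZMod 2) := ⟨rfl⟩

/-- The dyadic group `G = ∏_{k=0}^∞ ℤ/2ℤ`. -/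
abbrev G : Type := ℕ → ZMod 2

instance : MeasurableSpace G := borel G
instance : BorelSpace G := ⟨rfl⟩

/-- The normalized Haar measure on the dyadic group. -/
def μG : Measure G := Measure.addHaarMeasure ⊤

/-- The Walsh–Paley functions `w_n(x) = ∏_k ((-1)^{x_k})^{n_k}`. -/
def walsh (n : ℕ) (x : G) : ℝ :=
  ∏ k ∈ Finset.range (n + 1), if n.testBit k then (-1 : ℝ) ^ ((x k).val) else 1

/-- The Walsh–Dirichlet kernel `D_n = ∑_{k<n} w_k`. -/
def dirichlet (n : ℕ) (x : G) : ℝ := ∑ k ∈ Finset.range n, walsh k x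

/-- The Walsh–Fejér kernel `K_n = (1/n) ∑_{k=1}^n D_k`. -/
def fejer (n : ℕ) (x : G) : ℝ :=
  (n : ℝ)⁻¹ * ∑ k ∈ Finset.range n, dirichlet (k + 1) x

/-- The Walsh–Fourier coefficients. -/
def walshCoeff (f : G → ℝ) (k : ℕ) : ℝ := ∫ x, f x * walsh k x ∂μG

/-- The partial sums of the Walsh–Fourier series. -/
def partialSum (f : G → ℝ) (m : ℕ) (x : G) : ℝ :=
  ∑ k ∈ Finset.range m, walshCoeff f k * walsh k x

/-- The Walsh–Fejér means `σ_m f = (1/m) ∑_{k=1}^m S_k f`. -/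
def fejerMean (f : G → ℝ) (m : ℕ) (x : G) : ℝ :=
  (m : ℝ)⁻¹ * ∑ k ∈ Finset.range m, partialSum f (k + 1) x

/-- `e_n ∈ G`: 1 in coordinate `n`, 0 elsewhere. -/
def eVec (n : ℕ) : G := fun i => if i = n then 1 else 0

/-- The cylinder `I_n(y) = {x : x_i = y_i for i < n}`. -/
def cyl (n : ℕ) (y : G) : Set G := {x | ∀ i < n, x i = y i}

theorem sum_mul_measure_le_lintegral {α ι : Type*} [MeasurableSpace α] {μ : Measure α}
    {s : Finset ι} {S : ι → Set α} (hd : (s : Set ι).PairwiseDisjoint S)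
    (hm : ∀ i ∈ s, MeasurableSet (S i)) {f : α → ℝ≥0∞} {c : ι → ℝ≥0∞}
    (hf : ∀ i ∈ s, ∀ x ∈ S i, c i ≤ f x) :
    ∑ i ∈ s, c i * μ (S i) ≤ ∫⁻ x, f x ∂μ :=
  calc ∑ i ∈ s, c i * μ (S i) = ∑ i ∈ s, ∫⁻ _ in S i, c i ∂μ := by
        simp only [setLIntegral_const]
    _ ≤ ∑ i ∈ s, ∫⁻ x in S i, f x ∂μ :=
        Finset.sum_le_sum fun i hi => setLIntegral_mono' (hm i hi) (hf i hi)
    _ = ∫⁻ x in ⋃ i ∈ s, S i, f x ∂μ := (lintegral_biUnion_finset hd hm f).symm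
    _ ≤ ∫⁻ x, f x ∂μ := setLIntegral_le_lintegral _ _

theorem sum_dirichlet_eq_mul_fejer (q : ℕ) (x : G) :
    ∑ j ∈ Finset.Icc 1 q, dirichlet j x = q * fejer q x := by
  rcases Nat.eq_zero_or_pos q with rfl | hq
  · simp
  · rw [fejer, ← mul_assoc, mul_inv_cancel₀ (by positivity), one_mul,
      ← Finset.Ico_add_one_right_eq_Icc, Finset.sum_Ico_eq_sum_range, add_tsub_cancel_right]
    simp only [add_comm 1]

theorem isOpen_cyl (n : ℕ) (y : G) : IsOpen (cyl n y) := by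
  have : cyl n y = ⋂ i ∈ Finset.range n, (fun x : G => x i) ⁻¹' {y i} := by
    ext x; simp [cyl]
  rw [this]
  exact isOpen_biInter_finset fun i _ =>
    (continuous_apply i).isOpen_preimage _ (isOpen_discrete _)

theorem measurableSet_cyl (n : ℕ) (y : G) : MeasurableSet (cyl n y) :=
  (isOpen_cyl n y).measurableSet

theorem disjoint_cyl {m n i : ℕ} {y z : G} (hm : i < m) (hn : i < n) (h : y i ≠ z i) :
    Disjoint (cyl m y) (cyl n z) :=
  Set.disjoint_left.2 fun _ hy hz => h ((hy i hm).symm.trans (hz i hn))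

theorem mem_cyl_succ {n : ℕ} {x y : G} : x ∈ cyl (n + 1) y ↔ x ∈ cyl n y ∧ x n = y n :=
  Nat.forall_lt_succ_right

theorem cyl_eVec_self (n : ℕ) : cyl n (eVec n) = cyl n 0 := by
  ext x
  refine forall₂_congr fun i hi => ?_
  simp [eVec, hi.ne]

theorem cyl_eq_union_cyl_succ (n : ℕ) : cyl n 0 = cyl (n + 1) 0 ∪ cyl (n + 1) (eVec n) := by
  ext x
  have hx : x n = 0 ∨ x n = 1 := by
    generalize x n = a
    revert a
    decide
  simp only [Set.mem_union, mem_cyl_succ, cyl_eVec_self, eVec, Pi.zero_apply]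
  tauto

instance : μG.IsAddHaarMeasure := Measure.isAddHaarMeasure_addHaarMeasure ⊤

instance : IsProbabilityMeasure μG :=
  ⟨by simpa [μG] using
    Measure.addHaarMeasure_self (K₀ := (⊤ : TopologicalSpace.PositiveCompacts G))⟩

theorem preimage_neg_add_cyl_zero (n : ℕ) (y : G) :
    (fun x => -y + x) ⁻¹' cyl n 0 = cyl n y := by
  ext x
  exact forall₂_congr fun i _ => neg_add_eq_zero.trans eq_comm

theorem measure_cyl_zero (n : ℕ) : μG (cyl n 0) = 2⁻¹ ^ n := by
  induction n with
  | zero => simp [cyl]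
  | succ n ih =>
    have hsplit : μG (cyl n 0) = 2 * μG (cyl (n + 1) 0) := by
      rw [cyl_eq_union_cyl_succ, measure_union _ (measurableSet_cyl _ _), two_mul,
        ← preimage_neg_add_cyl_zero (n + 1) (eVec n), measure_preimage_add]
      exact disjoint_cyl n.lt_succ_self n.lt_succ_self (by simp [eVec])
    calc μG (cyl (n + 1) 0) = 2⁻¹ * (2 * μG (cyl (n + 1) 0)) := by
          rw [← mul_assoc, ENNReal.inv_mul_cancel two_ne_zero ENNReal.ofNat_ne_top, one_mul]
      _ = 2⁻¹ ^ (n + 1) := by rw [← hsplit, ih, pow_succ']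

theorem measure_cyl (n : ℕ) (y : G) : μG (cyl n y) = 2⁻¹ ^ n := by
  rw [← preimage_neg_add_cyl_zero, measure_preimage_add, measure_cyl_zero]

def peakCyl (k s : ℕ) : Set G := cyl (2 * s + 1) (eVec (2 * k) + eVec (2 * s))

theorem pairwise_disjoint_peakCyl_diag :
    Pairwise (Function.onFun Disjoint fun k => peakCyl k (k + 2)) := by
  refine (pairwise_disjoint_on _).2 fun k k' hlt =>
    disjoint_cyl (i := 2 * k) (by omega) (by omega) ?_
  simp [eVec, show 2 * k ≠ 2 * (k + 2) by omega, show 2 * k ≠ 2 * k' by omega,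
    show 2 * k ≠ 2 * (k' + 2) by omega]

theorem two_pow_le_ofReal_sqrt {k : ℕ} {t : ℝ} (h : (4 : ℝ) ^ (k + (k + 2)) / 4 ≤ t) :
    (2 : ℝ≥0∞) ^ (2 * k + 1) ≤ ENNReal.ofReal √t := by
  have hsq : ((2 : ℝ) ^ (2 * k + 1)) ^ 2 = (4 : ℝ) ^ (k + (k + 2)) / 4 := by
    rw [show (4 : ℝ) ^ (k + (k + 2)) = 2 ^ (2 * (k + (k + 2))) by rw [pow_mul]; norm_num]
    ring
  rw [← ENNReal.ofReal_ofNat, ← ENNReal.ofReal_pow zero_le_two]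
  exact ENNReal.ofReal_le_ofReal (Real.le_sqrt_of_sq_le (hsq ▸ h))

theorem two_pow_mul_measure_peakCyl_diag (k : ℕ) :
    (2 : ℝ≥0∞) ^ (2 * k + 1) * μG (peakCyl k (k + 2)) = 16⁻¹ := by
  rw [peakCyl, measure_cyl, show 2 * (k + 2) + 1 = (2 * k + 1) + 4 by ring,
    pow_add (2⁻¹ : ℝ≥0∞), ← mul_assoc, ← mul_pow,
    ENNReal.mul_inv_cancel two_ne_zero ENNReal.ofNat_ne_top, one_pow, one_mul, ← ENNReal.inv_pow]
  norm_num

theorem ofReal_div_32_le_sub_two_div_16 {A : ℕ} (hA : 4 ≤ A) :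
    ENNReal.ofReal (1 / 32 * A) ≤ (A - 2 : ℕ) * 16⁻¹ := by
  rw [← ENNReal.ofReal_natCast, ← ENNReal.ofReal_ofNat,
    ← ENNReal.ofReal_inv_of_pos (by norm_num), ← ENNReal.ofReal_mul (by positivity)]
  refine ENNReal.ofReal_le_ofReal ?_
  rw [Nat.cast_sub (by omega : 2 ≤ A)]
  have : (4 : ℝ) ≤ A := by exact_mod_cast hA
  linarith

/-- `∑_{j=1}^q D_j = q K_q`, and the integrated lower bound
`∫ |q_{A−1} K_{q_{A−1}}|^{1/2} dμ ≥ c·A` under the pointwise Blahota–Gát–Goginava bound. -/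
theorem fejer_kernel_half_norm_lower_bound :
    (∀ (q : ℕ) (x : G), (∑ j ∈ Finset.Icc 1 q, dirichlet j x) = (q : ℝ) * fejer q x) ∧
    ∃ c : ℝ, 0 < c ∧ ∀ A : ℕ, 5 ≤ A →
      (∀ k s : ℕ, k ≤ A - 3 → k + 2 ≤ s → s ≤ A - 1 →
        ∀ x ∈ cyl (2 * s + 1) (eVec (2 * k) + eVec (2 * s)),
          (4 : ℝ) ^ (k + s) / 4 ≤
            (∑ j ∈ Finset.range A, 4 ^ j : ℕ) * |fejer (∑ j ∈ Finset.range A, 4 ^ j) x|) →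
      ENNReal.ofReal (c * A) ≤
        ∫⁻ x, ENNReal.ofReal (Real.sqrt
          ((∑ j ∈ Finset.range A, 4 ^ j : ℕ) *
            |fejer (∑ j ∈ Finset.range A, 4 ^ j) x|)) ∂μG := by
  refine ⟨sum_dirichlet_eq_mul_fejer, 1 / 32, by norm_num, fun A hA hK => ?_⟩
  calc ENNReal.ofReal (1 / 32 * A) ≤ (A - 2 : ℕ) * 16⁻¹ :=
        ofReal_div_32_le_sub_two_div_16 (by omega)
    _ = ∑ k ∈ Finset.range (A - 2), 2 ^ (2 * k + 1) * μG (peakCyl k (k + 2)) := by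
        simp [two_pow_mul_measure_peakCyl_diag]
    _ ≤ _ := sum_mul_measure_le_lintegral
        (pairwise_disjoint_peakCyl_diag.set_pairwise _) (fun _ _ => measurableSet_cyl _ _)
        fun k hk x hx =>
          have hk : k < A - 2 := Finset.mem_range.1 hk
          two_pow_le_ofReal_sqrt (hK k (k + 2) (by omega) le_rfl (by omega) x hx)
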